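/- arXiv:1109.4070 — 2 statements merged into one kernel-verified Lean document; each statement's English description precedes it below -/
import Mathlib

section
/- Let p be a prime, n a positive integer, and k a positive integer. Let W be a module over R = 𝔽_p[G] (written additively), let v_1, ..., v_k ∈ W be elements that form a basis of a free R-submodule of rank k (i.e., the only relation ∑_{i=1}^k g_i·v_i = 0 with g_i ∈ R is the trivial one), and let δ ∈ W satisfy (σ-1)^{p^n-1}·δ = 0. Then for every tuple (c_1,...,c_k) ∈ 𝔽_p^k, the elements v_1 + c_1·δ, ..., v_k + c_k·δ also admit only the trivial R-linear relation; in particular the R-submodule they generate is free of rank k. (Freeness claim in the proof of Proposition 4.2.) -/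
/-- The cyclic group `ℤ/pⁿℤ`, written multiplicatively. -/
abbrev Gpn (p n : ℕ) : Type := Multiplicative (ZMod (p ^ n))

/-- The group algebra `𝔽_p[ℤ/pⁿℤ]`. -/
abbrev Rpn (p n : ℕ) : Type := MonoidAlgebra (ZMod p) (Gpn p n)

/-- The fixed generator `σ` of `ℤ/pⁿℤ`, viewed inside the group algebra. -/
noncomputable def sigmaPn (p n : ℕ) : Rpn p n :=
  MonoidAlgebra.of (ZMod p) (Gpn p n) (Multiplicative.ofAdd (1 : ZMod (p ^ n)))

/-! Write `t = σ - 1` and `q = pⁿ`. In `𝔽_p[G]` we have `t ^ q = σ ^ q - 1 = 0` by Frobenius,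
every element is a scalar modulo `t`, and `t ^ (q - 1) ≠ 0` (its image in `𝔽_p[X]/(X ^ q - 1)` is
`(X - 1) ^ (q - 1)`, while `X ^ q - 1 = (X - 1) ^ q`); hence the annihilator of `t ^ (q - 1)` is `t R`.
Given a relation `∑ gᵢ (vᵢ + cᵢ δ) = 0`, induction on `m ≤ q` shows `t ^ m ∣ gᵢ`: if `gᵢ = t ^ m hᵢ`,
multiplying the relation by `t ^ (q - 1 - m)` kills the `δ`-term, so the independence of the `vᵢ`
gives `t ^ (q - 1) hᵢ = 0`, i.e. `t ∣ hᵢ`. -/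

def ZMod.powMonoidHom {M : Type*} [Monoid M] (q : ℕ) [NeZero q] (x : M) (hx : x ^ q = 1) :
    Multiplicative (ZMod q) →* M where
  toFun g := x ^ g.toAdd.val
  map_one' := by simp
  map_mul' a b := by rw [toAdd_mul, ZMod.val_add, ← pow_eq_pow_mod _ hx, pow_add]

theorem ZMod.powMonoidHom_ofAdd_one {M : Type*} [Monoid M] (q : ℕ) [NeZero q] (x : M)
    (hx : x ^ q = 1) : ZMod.powMonoidHom q x hx (.ofAdd 1) = x := by
  rw [ZMod.powMonoidHom, MonoidHom.coe_mk, OneHom.coe_mk, toAdd_ofAdd, ZMod.val_one_eq_one_mod,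
    ← pow_eq_pow_mod _ hx, pow_one]

section GroupAlgebra

variable {p n : ℕ}

theorem sigmaPn_pow (m : ℕ) :
    sigmaPn p n ^ m = MonoidAlgebra.of (ZMod p) (Gpn p n) (.ofAdd (m : ZMod (p ^ n))) := by
  rw [sigmaPn, ← map_pow, ← ofAdd_nsmul, nsmul_one]

theorem sigmaPn_sub_one_pow_card [Fact p.Prime] : (sigmaPn p n - 1) ^ p ^ n = 0 := by
  have := charP_of_injective_algebraMap' (ZMod p) (A := Rpn p n) p
  rw [sub_pow_char_pow, sigmaPn_pow, ZMod.natCast_self, ofAdd_zero, map_one, one_pow, sub_self]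

theorem sigmaPn_sub_one_dvd_sub_algebraMap [NeZero (p ^ n)] (r : Rpn p n) :
    ∃ a : ZMod p, sigmaPn p n - 1 ∣ r - algebraMap (ZMod p) (Rpn p n) a := by
  induction r using MonoidAlgebra.induction_on with
  | of g =>
    refine ⟨1, ?_⟩
    rw [map_one, ← ofAdd_toAdd g, ← ZMod.natCast_zmod_val g.toAdd, ← sigmaPn_pow]
    exact sub_one_dvd_pow_sub_one _ _
  | add r s hr hs =>
    obtain ⟨a, ha⟩ := hr
    obtain ⟨b, hb⟩ := hs
    exact ⟨a + b, by simpa [map_add, add_sub_add_comm] using dvd_add ha hb⟩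
  | smul a r hr =>
    obtain ⟨b, hb⟩ := hr
    exact ⟨a * b, by
      simpa [map_mul, Algebra.smul_def, mul_sub] using hb.mul_left (algebraMap _ _ a)⟩

theorem sigmaPn_sub_one_pow_pred_ne_zero [Fact p.Prime] :
    (sigmaPn p n - 1) ^ (p ^ n - 1) ≠ 0 := by
  open Polynomial in
  set f : (ZMod p)[X] := X ^ p ^ n - 1
  have hroot : AdjoinRoot.root f ^ p ^ n = 1 := by
    rw [← sub_eq_zero, ← AdjoinRoot.mk_X, ← map_pow, ← map_one (AdjoinRoot.mk f), ← map_sub,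
      AdjoinRoot.mk_self]
  let ψ := MonoidAlgebra.lift (ZMod p) (AdjoinRoot f) (Gpn p n) (ZMod.powMonoidHom _ _ hroot)
  have hψ : ψ (sigmaPn p n) = AdjoinRoot.mk f X := by
    rw [sigmaPn, MonoidAlgebra.lift_of, ZMod.powMonoidHom_ofAdd_one, AdjoinRoot.mk_X]
  intro h
  have hdvd : (X - C 1 : (ZMod p)[X]) ^ p ^ n ∣ (X - C 1) ^ (p ^ n - 1) := by
    rw [sub_pow_char_pow, C_1, one_pow, ← AdjoinRoot.mk_eq_zero, map_pow, map_sub, map_one, ← hψ,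
      ← map_one ψ, ← map_sub, ← map_pow, h, map_zero]
  have hle := (pow_dvd_pow_iff (X_sub_C_ne_zero 1) (not_isUnit_X_sub_C 1)).1 hdvd
  have hpos : 0 < p ^ n := Nat.pos_of_neZero _
  omega

theorem sigmaPn_sub_one_dvd_of_pow_pred_mul_eq_zero [Fact p.Prime] {r : Rpn p n}
    (hr : (sigmaPn p n - 1) ^ (p ^ n - 1) * r = 0) : sigmaPn p n - 1 ∣ r := by
  obtain ⟨a, s, hs⟩ := sigmaPn_sub_one_dvd_sub_algebraMap r
  have ha : a • (sigmaPn p n - 1) ^ (p ^ n - 1) = 0 := by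
    rw [← hr, sub_eq_iff_eq_add'.1 hs, mul_add, ← mul_assoc, ← pow_succ,
      Nat.sub_add_cancel (Nat.pos_of_neZero _), sigmaPn_sub_one_pow_card, zero_mul, add_zero,
      Algebra.smul_def, mul_comm]
  obtain rfl : a = 0 := (smul_eq_zero.1 ha).resolve_right sigmaPn_sub_one_pow_pred_ne_zero
  exact ⟨s, by rw [← hs, map_zero, sub_zero]⟩

end GroupAlgebra

section PerturbedBasis

variable {ι R M : Type*} [CommRing R] [AddCommGroup M] [Module R M] {t : R} {q : ℕ}
  {v : ι → M} {δ : M}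

theorem pow_succ_dvd_of_sum_smul_add_smul_eq_zero (hv : LinearIndependent R v)
    (hann : ∀ r, t ^ q * r = 0 → t ∣ r) (hδ : t ^ q • δ = 0) {c : ι → R} {s : Finset ι}
    {g : ι → R} (hg : ∑ i ∈ s, g i • (v i + c i • δ) = 0) {m : ℕ} (hm : m ≤ q)
    (hdvd : ∀ i ∈ s, t ^ m ∣ g i) : ∀ i ∈ s, t ^ (m + 1) ∣ g i := by
  have hkill : (∑ i ∈ s, t ^ (q - m) * (g i * c i)) • δ = 0 := by
    obtain ⟨a, ha⟩ : t ^ q ∣ ∑ i ∈ s, t ^ (q - m) * (g i * c i) := Finset.dvd_sum fun i hi =>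
      pow_sub_mul_pow t hm ▸ mul_dvd_mul_left _ ((hdvd i hi).mul_right _)
    rw [ha, mul_comm, mul_smul, hδ, smul_zero]
  have hrel : ∑ i ∈ s, (t ^ (q - m) * g i) • v i = 0 := by
    have := congrArg (t ^ (q - m) • ·) hg
    simp only [smul_zero, Finset.smul_sum, smul_add, smul_smul, Finset.sum_add_distrib] at this
    rwa [← Finset.sum_smul, hkill, add_zero] at this
  intro i hi
  obtain ⟨h, hh⟩ := hdvd i hi
  have hh_ann : t ^ q * h = 0 := by
    rw [← pow_sub_mul_pow t hm, mul_assoc, ← hh]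
    exact linearIndependent_iff'.1 hv s _ hrel i hi
  obtain ⟨h', rfl⟩ := hann h hh_ann
  exact ⟨h', by rw [hh, pow_succ, mul_assoc]⟩

theorem LinearIndependent.add_smul_of_pow_smul_eq_zero (hv : LinearIndependent R v)
    (ht : t ^ (q + 1) = 0) (hann : ∀ r, t ^ q * r = 0 → t ∣ r) (hδ : t ^ q • δ = 0)
    (c : ι → R) : LinearIndependent R fun i => v i + c i • δ := by
  refine linearIndependent_iff'.2 fun s g hg => ?_
  have hdvd : ∀ m ≤ q + 1, ∀ i ∈ s, t ^ m ∣ g i := by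
    intro m
    induction m with
    | zero => simp
    | succ m ih => exact fun hm =>
        pow_succ_dvd_of_sum_smul_add_smul_eq_zero hv hann hδ hg (by omega) (ih (by omega))
  simpa [ht] using hdvd (q + 1) le_rfl

end PerturbedBasis

theorem perturbed_basis_free_general (p n k : ℕ) (hp : p.Prime)
    (W : Type*) [AddCommGroup W] [Module (Rpn p n) W]
    (v : Fin k → W)
    (hv : ∀ g : Fin k → Rpn p n, ∑ i, g i • v i = 0 → ∀ i, g i = 0)
    (δ : W) (hδ : ((sigmaPn p n - 1) ^ (p ^ n - 1)) • δ = 0) :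
    ∀ c : Fin k → ZMod p,
      (∀ g : Fin k → Rpn p n,
          ∑ i, g i • (v i + algebraMap (ZMod p) (Rpn p n) (c i) • δ) = 0 → ∀ i, g i = 0) ∧
        Nonempty
          ((Submodule.span (Rpn p n)
              (Set.range fun i => v i + algebraMap (ZMod p) (Rpn p n) (c i) • δ)) ≃ₗ[Rpn p n]
            (Fin k → Rpn p n)) := by
  have : Fact p.Prime := ⟨hp⟩
  intro c
  have hli : LinearIndependent (Rpn p n) fun i => v i + algebraMap (ZMod p) (Rpn p n) (c i) • δ :=
    (Fintype.linearIndependent_iff.2 hv).add_smul_of_pow_smul_eq_zero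
      (by rw [Nat.sub_add_cancel (Nat.pos_of_neZero _), sigmaPn_sub_one_pow_card])
      (fun _ => sigmaPn_sub_one_dvd_of_pow_pred_mul_eq_zero) hδ _
  exact ⟨Fintype.linearIndependent_iff.1 hli, ⟨(Module.Basis.span hli).equivFun⟩⟩

/-- Freeness claim in the proof of Proposition 4.2: if `v₁, …, v_k` admit only the
trivial `R = 𝔽_p[G]`-linear relation and `(σ-1)^{pⁿ-1}·δ = 0`, then for every
`c ∈ 𝔽_p^k` the elements `vᵢ + cᵢ·δ` also admit only the trivial relation; in
particular the submodule they generate is free of rank `k`. -/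
theorem perturbed_basis_free (p n k : ℕ) (hp : p.Prime) (hn : 0 < n) (hk : 0 < k)
    (W : Type*) [AddCommGroup W] [Module (Rpn p n) W]
    (v : Fin k → W)
    (hv : ∀ g : Fin k → Rpn p n, ∑ i, g i • v i = 0 → ∀ i, g i = 0)
    (δ : W) (hδ : ((sigmaPn p n - 1) ^ (p ^ n - 1)) • δ = 0) :
    ∀ c : Fin k → ZMod p,
      (∀ g : Fin k → Rpn p n,
          ∑ i, g i • (v i + algebraMap (ZMod p) (Rpn p n) (c i) • δ) = 0 → ∀ i, g i = 0) ∧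
        Nonempty
          ((Submodule.span (Rpn p n)
              (Set.range fun i => v i + algebraMap (ZMod p) (Rpn p n) (c i) • δ)) ≃ₗ[Rpn p n]
            (Fin k → Rpn p n)) :=
  perturbed_basis_free_general p n k hp W v hv δ hδ
end

section
/- Let p be a prime, n a positive integer, and k a positive integer. Let W be a module over R = 𝔽_p[G] (written additively), let v_1, ..., v_k ∈ W form a basis of a free R-submodule V of rank k, and let δ ∈ W satisfy (σ-1)^{p^n-1}·δ = 0 and δ ∉ V. For each c = (c_1,...,c_k) ∈ 𝔽_p^k, let V_c denote the R-submodule of W generated by v_1 + c_1·δ, ..., v_k + c_k·δ. Then the map c ↦ V_c is injective: if b ≠ c in 𝔽_p^k then V_b ≠ V_c. (Distinctness claim in the proof of Proposition 4.2.) -/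
/-!
`𝔽_p[G]` is a local ring: in characteristic `p` every `s` has `s ^ pⁿ ∈ 𝔽_p`, so `s` or `1 - s`
is a unit. If `V_b = V_c`, expressing `v_i + b_i δ` through the generators of `V_c` gives a
relation `∑ h_j v_j + r δ = 0`. As `δ ∉ V`, `r` is not a unit. Multiplying by
`a = (σ - 1)^(pⁿ-1)`, which kills `δ`, and using freeness gives `a h_j = 0`; since `a ≠ 0`,
no `h_j` is a unit either. Reducing the coefficients modulo the maximal ideal yields `b_i = c_i`.
That `a ≠ 0` follows from `(σ - 1)^(pⁿ-1) = ∑_{j < pⁿ} σʲ` in characteristic `p`.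
-/

namespace MonoidAlgebra

variable {K G : Type*} [CommRing K] [CommMonoid G] {p n : ℕ} [ExpChar K p]

theorem pow_char_pow_mem_range_algebraMap (hG : ∀ g : G, g ^ p ^ n = 1) (s : MonoidAlgebra K G) :
    s ^ p ^ n ∈ Set.range (algebraMap K (MonoidAlgebra K G)) := by
  have := ExpChar.of_injective_algebraMap' K (A := MonoidAlgebra K G) p
  induction s using MonoidAlgebra.induction_on with
  | of g => exact ⟨1, by rw [map_one, ← map_pow, hG, map_one]⟩
  | add s t hs ht =>
    obtain ⟨a, ha⟩ := hs
    obtain ⟨b, hb⟩ := ht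
    exact ⟨a + b, by rw [add_pow_expChar_pow, ← ha, ← hb, map_add]⟩
  | smul r s hs =>
    obtain ⟨a, ha⟩ := hs
    exact ⟨r ^ p ^ n * a, by rw [smul_pow, ← ha, map_mul, Algebra.smul_def, map_pow]⟩

theorem isLocalRing_of_forall_pow_char_pow_eq_one [IsLocalRing K] (hG : ∀ g : G, g ^ p ^ n = 1) :
    IsLocalRing (MonoidAlgebra K G) := by
  refine IsLocalRing.of_isUnit_or_isUnit_one_sub_self fun s => ?_
  have := ExpChar.of_injective_algebraMap' K (A := MonoidAlgebra K G) p
  have hq : p ^ n ≠ 0 := pow_ne_zero n (expChar_pos K p).ne'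
  obtain ⟨a, ha⟩ := pow_char_pow_mem_range_algebraMap hG s
  have h1a : (1 - s) ^ p ^ n = algebraMap K _ (1 - a) := by
    rw [sub_pow_expChar_pow, one_pow, map_sub, map_one, ha]
  rw [← isUnit_pow_iff hq, ← ha, ← isUnit_pow_iff (a := 1 - s) hq, h1a]
  exact (IsLocalRing.isUnit_or_isUnit_one_sub_self a).imp (·.map _) (·.map _)

end MonoidAlgebra

theorem sub_one_pow_char_pow_sub_one_eq_geom_sum {A : Type*} [CommRing A] (p n : ℕ) [Fact p.Prime]
    [Algebra (ZMod p) A] (y : A) :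
    (y - 1) ^ (p ^ n - 1) = ∑ j ∈ Finset.range (p ^ n), y ^ j := by
  open Polynomial in
  have hX : ((X : (ZMod p)[X]) - 1) ^ (p ^ n - 1) = ∑ j ∈ Finset.range (p ^ n), X ^ j := by
    refine mul_left_cancel₀ (X_sub_C_ne_zero (1 : ZMod p)) ?_
    rw [C_1, ← pow_succ', Nat.sub_add_cancel (Nat.one_le_pow _ _ (Fact.out : p.Prime).pos),
      sub_pow_char_pow, one_pow, mul_comm, geom_sum_mul]
  simpa using congrArg (Polynomial.aeval y) hX

theorem sigmaPn_pow_s4 (p n j : ℕ) :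
    sigmaPn p n ^ j = MonoidAlgebra.single (Multiplicative.ofAdd (j : ZMod (p ^ n))) 1 := by
  rw [sigmaPn, ← map_pow, ← ofAdd_nsmul, nsmul_one]
  rfl

theorem sigmaPn_sub_one_pow_ne_zero (p n : ℕ) [Fact p.Prime] :
    (sigmaPn p n - 1) ^ (p ^ n - 1) ≠ 0 := by
  rw [sub_one_pow_char_pow_sub_one_eq_geom_sum]
  intro h
  have hcoeff := congrArg (fun s : Rpn p n => s.coeff 1) h
  simp only [MonoidAlgebra.coeff_sum, sigmaPn_pow_s4, MonoidAlgebra.coeff_single,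
    Finsupp.finsetSum_apply, Finsupp.single_apply] at hcoeff
  rw [Finset.sum_eq_single 0] at hcoeff
  · simp at hcoeff
  · intro j hj hj0
    refine if_neg ?_
    rw [ofAdd_eq_one, ZMod.natCast_eq_zero_iff]
    exact Nat.not_dvd_of_pos_of_lt (Nat.pos_of_ne_zero hj0) (Finset.mem_range.mp hj)
  · exact fun h0 => (h0 (Finset.mem_range.mpr (pow_pos (Fact.out : p.Prime).pos n))).elim

section PerturbedSpan

open Submodule IsLocalRing

variable {R M ι : Type*} [CommRing R] [AddCommGroup M] [Module R M] [Fintype ι]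
  {v : ι → M} {a : R} {δ : M}

theorem mem_maximalIdeal_of_sum_smul_add_smul_eq_zero [IsLocalRing R]
    (hv : LinearIndependent R v) (ha : a ≠ 0) (haδ : a • δ = 0) (hδ : δ ∉ span R (Set.range v))
    {h : ι → R} {r : R} (hrel : ∑ i, h i • v i + r • δ = 0) :
    r ∈ maximalIdeal R ∧ ∀ i, h i ∈ maximalIdeal R := by
  refine ⟨fun hr => hδ ?_, fun i hi => ha ?_⟩
  · have hrδ : r • δ ∈ span R (Set.range v) := by
      rw [eq_neg_of_add_eq_zero_right hrel]
      exact neg_mem ((mem_span_range_iff_exists_fun R).mpr ⟨h, rfl⟩)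
    exact (smul_mem_iff_of_isUnit _ hr).mp hrδ
  · have hah : ∑ j, (a * h j) • v j = 0 := by
      simp_rw [mul_smul, ← Finset.smul_sum]
      rw [eq_neg_of_add_eq_zero_left hrel, smul_neg, smul_comm, haδ, smul_zero, neg_zero]
    exact (IsUnit.mul_left_eq_zero hi).mp (Fintype.linearIndependent_iff.mp hv _ hah i)

theorem injective_span_range_add_algebraMap_smul {K : Type*} [Field K] [Algebra K R]
    [IsLocalRing R] (hv : LinearIndependent R v) (ha : a ≠ 0) (haδ : a • δ = 0)
    (hδ : δ ∉ span R (Set.range v)) :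
    Function.Injective fun c : ι → K =>
      span R (Set.range fun i => v i + algebraMap K R (c i) • δ) := by
  classical
  intro b c hbc
  dsimp only at hbc
  funext i
  have hmem : v i + algebraMap K R (b i) • δ ∈
      span R (Set.range fun j => v j + algebraMap K R (c j) • δ) :=
    hbc ▸ subset_span ⟨i, rfl⟩
  obtain ⟨g, hg⟩ := (mem_span_range_iff_exists_fun R).mp hmem
  have hrel : ∑ j, (g j - if j = i then 1 else 0) • v j +
      (∑ j, g j * algebraMap K R (c j) - algebraMap K R (b i)) • δ = 0 := by
    simp only [smul_add, Finset.sum_add_distrib] at hg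
    simp only [sub_smul, ite_smul, one_smul, zero_smul, Finset.sum_sub_distrib,
      Finset.sum_ite_eq', Finset.mem_univ, if_true, Finset.sum_smul, mul_smul]
    linear_combination (norm := module) hg
  obtain ⟨hr, hh⟩ := mem_maximalIdeal_of_sum_smul_add_smul_eq_zero hv ha haδ hδ hrel
  have hg_res (j : ι) : residue R (g j) = if j = i then 1 else 0 := by
    have := (residue_eq_zero_iff _).mpr (hh j)
    rwa [map_sub, sub_eq_zero, apply_ite (residue R), map_one, map_zero] at this
  have hcb : residue R (algebraMap K R (c i)) = residue R (algebraMap K R (b i)) := by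
    simpa [hg_res, sub_eq_zero] using (residue_eq_zero_iff _).mpr hr
  exact (((residue R).comp (algebraMap K R)).injective hcb).symm

end PerturbedSpan

theorem perturbed_submodules_distinct_general (p n k : ℕ) (hp : p.Prime)
    (W : Type*) [AddCommGroup W] [Module (Rpn p n) W]
    (v : Fin k → W)
    (hv : ∀ g : Fin k → Rpn p n, ∑ i, g i • v i = 0 → ∀ i, g i = 0)
    (δ : W) (hδ₁ : ((sigmaPn p n - 1) ^ (p ^ n - 1)) • δ = 0)
    (hδ₂ : δ ∉ Submodule.span (Rpn p n) (Set.range v)) :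
    Function.Injective (fun c : Fin k → ZMod p =>
      Submodule.span (Rpn p n)
        (Set.range fun i => v i + algebraMap (ZMod p) (Rpn p n) (c i) • δ)) := by
  have := Fact.mk hp
  have : IsLocalRing (Rpn p n) :=
    MonoidAlgebra.isLocalRing_of_forall_pow_char_pow_eq_one fun g => by
      rw [← toAdd_eq_zero, toAdd_pow, nsmul_eq_mul, ZMod.natCast_self, zero_mul]
  exact injective_span_range_add_algebraMap_smul (Fintype.linearIndependent_iff.mpr hv)
    (sigmaPn_sub_one_pow_ne_zero p n) hδ₁ hδ₂

/-- Distinctness claim in the proof of Proposition 4.2: with `v₁, …, v_k` a basis of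
a free rank-`k` submodule `V`, `(σ-1)^{pⁿ-1}·δ = 0` and `δ ∉ V`, the assignment
`c ↦ V_c = span(v₁ + c₁δ, …, v_k + c_kδ)` is injective on `𝔽_p^k`. -/
theorem perturbed_submodules_distinct (p n k : ℕ) (hp : p.Prime) (hn : 0 < n) (hk : 0 < k)
    (W : Type*) [AddCommGroup W] [Module (Rpn p n) W]
    (v : Fin k → W)
    (hv : ∀ g : Fin k → Rpn p n, ∑ i, g i • v i = 0 → ∀ i, g i = 0)
    (δ : W) (hδ₁ : ((sigmaPn p n - 1) ^ (p ^ n - 1)) • δ = 0)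
    (hδ₂ : δ ∉ Submodule.span (Rpn p n) (Set.range v)) :
    Function.Injective (fun c : Fin k → ZMod p =>
      Submodule.span (Rpn p n)
        (Set.range fun i => v i + algebraMap (ZMod p) (Rpn p n) (c i) • δ)) :=
  perturbed_submodules_distinct_general p n k hp W v hv δ hδ₁ hδ₂
end
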